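/- Let (M,g) be a time-oriented Lorentzian spin manifold and φ a nowhere-vanishing parallel spinor field. Then the Dirac current V_φ, defined by g(V_φ, X) = i^{r+1}⟨φ, X·φ⟩ for all X (r the number of negative eigenvalues of g), is a parallel vector field satisfying g(V_φ, V_φ) ≤ 0, i.e., V_φ is causal. -/
import Mathlib


/-!  Abstract framework for semi-Riemannian geometry.

A `SRM` bundles the pointwise data of a semi-Riemannian manifold (carrier,
tangent spaces, metric); smoothness is abstracted away.  A `SRM.Geometry`
bundles the associated differential-geometric operators (derivations,
Levi-Civita connection candidates, curvature, velocity and covariant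
derivative along curves, parallel transport).  The cone and warped-product
constructions are given concretely on the level of this data, and the
standard compatibility facts relating the geometry of the cone/warped
product with the geometry of the base are isolated as explicit predicates
(`ConeCompat`, `ConeCurveCompat`, `WarpedCompat`). -/

/-- Pointwise data of a semi-Riemannian manifold (smoothness abstracted). -/
structure SRM : Type 1 where
  M : Type
  T : M → Type
  grp : ∀ p, AddCommGroup (T p)
  mod : ∀ p, Module ℝ (T p)
  g : ∀ p, T p → T p → ℝ

attribute [instance] SRM.grp SRM.mod

namespace SRM

/-- Vector fields: sections of the tangent bundle. -/
abbrev VF (S : SRM) : Type := ∀ p : S.M, S.T p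

/-- Transport of tangent vectors along an equality of base points. -/
def tcast (S : SRM) : {p q : S.M} → p = q → S.T p → S.T q
  | _, _, rfl, v => v

/-- The geometric package of a semi-Riemannian manifold:  directional
derivative of functions, Lie bracket, covariant derivative of vector fields,
curvature tensor, velocity of curves, covariant derivative along curves and
parallel transport along curves. -/
structure Geometry (S : SRM) where
  deriv : S.VF → (S.M → ℝ) → (S.M → ℝ)
  bracket : S.VF → S.VF → S.VF
  nabla : S.VF → S.VF → S.VF
  R : ∀ p, S.T p → S.T p → S.T p → S.T p
  vel : (c : ℝ → S.M) → (t : ℝ) → S.T (c t)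
  covD : (c : ℝ → S.M) → ((t : ℝ) → S.T (c t)) → ((t : ℝ) → S.T (c t))
  ptrans : (c : ℝ → S.M) → (t : ℝ) → (S.T (c 0) →ₗ[ℝ] S.T (c t))
  ptrans_zero : ∀ c, ptrans c 0 = LinearMap.id
  ptrans_parallel : ∀ (c : ℝ → S.M) (v : S.T (c 0)),
    covD c (fun t => ptrans c t v) = fun _ => 0
  parallel_unique : ∀ (c : ℝ → S.M) (V : (t : ℝ) → S.T (c t)),
    covD c V = (fun _ => 0) → ∀ t, V t = ptrans c t (V 0)

namespace Geometry

variable {S : SRM}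

/-- The connection is the Levi-Civita connection of the metric, and the
curvature tensor is its curvature. -/
def IsLeviCivita (G : Geometry S) : Prop :=
  (∀ X Y Z : S.VF, G.deriv X (fun p => S.g p (Y p) (Z p)) =
      fun p => S.g p (G.nabla X Y p) (Z p) + S.g p (Y p) (G.nabla X Z p)) ∧
  (∀ X Y : S.VF, G.nabla X Y - G.nabla Y X = G.bracket X Y) ∧
  (∀ X Y Z : S.VF, (fun p => G.R p (X p) (Y p) (Z p)) =
      G.nabla X (G.nabla Y Z) - G.nabla Y (G.nabla X Z) - G.nabla (G.bracket X Y) Z)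

/-- A curve is a geodesic on a set of times. -/
def IsGeodesicOn (G : Geometry S) (c : ℝ → S.M) (s : Set ℝ) : Prop :=
  ∀ t ∈ s, G.covD c (G.vel c) t = 0

/-- Geodesic completeness: through every initial condition there is a
geodesic defined on all of `ℝ`. -/
def Complete (G : Geometry S) : Prop :=
  ∀ (p : S.M) (v : S.T p), ∃ c : ℝ → S.M,
    G.IsGeodesicOn c Set.univ ∧ ∃ h : c 0 = p, S.tcast h (G.vel c 0) = v

end Geometry

/-- The (space-like for `ε = 1`, time-like for `ε = -1`) cone over `S`:
`M̂ = ℝ_{>0} × M` with metric `ĝ_ε = ε dr² + r² g`. -/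
noncomputable def cone (S : SRM) (ε : ℝ) : SRM where
  M := {r : ℝ // 0 < r} × S.M
  T := fun p => ℝ × S.T p.2
  grp := fun _ => inferInstance
  mod := fun _ => inferInstance
  g := fun p v w => ε * v.1 * w.1 + (p.1 : ℝ) ^ 2 * S.g p.2 v.2 w.2

/-- Lift of a vector field on the base to the cone. -/
def coneLift (S : SRM) (ε : ℝ) (X : S.VF) : (S.cone ε).VF :=
  fun p => ((0 : ℝ), X p.2)

/-- The radial vector field `∂r` on the cone. -/
def coneRadial (S : SRM) (ε : ℝ) : (S.cone ε).VF :=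
  fun p => ((1 : ℝ), (0 : S.T p.2))

/-- Warped product `(ℝ × N, -ε ds² + f(s)² g_N)`. -/
noncomputable def warped (N : SRM) (ε : ℝ) (f : ℝ → ℝ) : SRM where
  M := ℝ × N.M
  T := fun p => ℝ × N.T p.2
  grp := fun _ => inferInstance
  mod := fun _ => inferInstance
  g := fun p v w => -ε * v.1 * w.1 + (f p.1) ^ 2 * N.g p.2 v.2 w.2

/-- Restriction of a semi-Riemannian manifold to a subset. -/
noncomputable def restrict (S : SRM) (U : Set S.M) : SRM where
  M := U
  T := fun p => S.T p.1
  grp := fun _ => inferInstance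
  mod := fun _ => inferInstance
  g := fun p => S.g p.1

end SRM

/-- A (global) isometry of semi-Riemannian manifolds. -/
structure SRIso (A B : SRM) where
  toEquiv : A.M ≃ B.M
  dmap : ∀ p, A.T p ≃ₗ[ℝ] B.T (toEquiv p)
  metric_compat : ∀ p v w, B.g (toEquiv p) (dmap p v) (dmap p w) = A.g p v w

/-- Compatibility of a geometry on the cone with the product structure:
brackets and derivations behave as for the product `ℝ_{>0} × M`. -/
def ConeCompat (S : SRM) (ε : ℝ) (G : SRM.Geometry S)
    (Gh : SRM.Geometry (S.cone ε)) : Prop :=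
  (∀ X : S.VF, Gh.bracket (S.coneRadial ε) (S.coneLift ε X) = 0) ∧
  (∀ X Y : S.VF, Gh.bracket (S.coneLift ε X) (S.coneLift ε Y) =
      S.coneLift ε (G.bracket X Y)) ∧
  (Gh.deriv (S.coneRadial ε) (fun p => (p.1 : ℝ)) = fun _ => 1) ∧
  (∀ f : S.M → ℝ, Gh.deriv (S.coneRadial ε) (fun p => f p.2) = fun _ => 0) ∧
  (∀ (X : S.VF) (f : S.M → ℝ),
      Gh.deriv (S.coneLift ε X) (fun p => f p.2) = fun p => G.deriv X f p.2) ∧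
  (∀ X : S.VF, Gh.deriv (S.coneLift ε X) (fun p => (p.1 : ℝ)) = fun _ => 0)

/-- Compatibility of the curve calculus of the cone with that of the base:
velocities split in coordinates, and the covariant derivative along a curve
is given by the standard cone formula. -/
def ConeCurveCompat (S : SRM) (ε : ℝ) (G : SRM.Geometry S)
    (Gh : SRM.Geometry (S.cone ε)) : Prop :=
  (∀ (ρ : ℝ → ℝ) (hρ : ∀ t, 0 < ρ t) (γ : ℝ → S.M) (t : ℝ),
      Gh.vel (fun t => (⟨ρ t, hρ t⟩, γ t)) t = (deriv ρ t, G.vel γ t)) ∧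
  (∀ (ρ : ℝ → ℝ) (hρ : ∀ t, 0 < ρ t) (γ : ℝ → S.M)
      (W : ℝ → ℝ) (Z : (t : ℝ) → S.T (γ t)) (t : ℝ),
      Gh.covD (fun t => (⟨ρ t, hρ t⟩, γ t)) (fun t => (W t, Z t)) t =
        (deriv W t - ε * ρ t * S.g (γ t) (Z t) (G.vel γ t),
         G.covD γ Z t + (deriv ρ t / ρ t) • Z t + (W t / ρ t) • G.vel γ t))

/-- Compatibility of a geometry on the warped product
`(ℝ × N, -ε ds² + f(s)² g_N)` with the base geometry: velocities split in
coordinates and geodesics are characterized by the warped-product geodesic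
equations. -/
def WarpedCompat (N : SRM) (ε : ℝ) (f : ℝ → ℝ) (Gn : SRM.Geometry N)
    (Gw : SRM.Geometry (N.warped ε f)) : Prop :=
  (∀ (σ : ℝ → ℝ) (γ : ℝ → N.M) (t : ℝ),
      Gw.vel (fun t => (σ t, γ t)) t = (deriv σ t, Gn.vel γ t)) ∧
  (∀ (σ : ℝ → ℝ) (γ : ℝ → N.M) (s : Set ℝ),
      Gw.IsGeodesicOn (fun t => (σ t, γ t)) s ↔
        ∀ t ∈ s,
          deriv (deriv σ) t +
              ε * deriv f (σ t) * f (σ t) *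
                N.g (γ t) (Gn.vel γ t) (Gn.vel γ t) = 0 ∧
          Gn.covD γ (Gn.vel γ) t +
              ((2 * deriv f (σ t) / f (σ t)) * deriv σ t) • Gn.vel γ t = 0)

/-- Existence of a geodesic with prescribed initial data, which is a geodesic
on the set of times `s`. -/
def HasGeodesicFrom (S : SRM) (G : SRM.Geometry S) (p : S.M) (v : S.T p)
    (s : Set ℝ) : Prop :=
  ∃ c : ℝ → S.M, G.IsGeodesicOn c s ∧ ∃ h : c 0 = p, S.tcast h (G.vel c 0) = v

/-- Spinorial data on a semi-Riemannian manifold: spinor bundle with Clifford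
multiplication, indefinite hermitian product, and spinor covariant
derivative, satisfying the standard compatibility relations. -/
structure SpinData (S : SRM) (G : SRM.Geometry S) where
  Sp : S.M → Type
  sgrp : ∀ p, AddCommGroup (Sp p)
  smod : ∀ p, Module ℂ (Sp p)
  /-- Clifford multiplication `X · φ`. -/
  cl : ∀ p, S.T p → Sp p → Sp p
  /-- The hermitian product `⟨·,·⟩` on spinors. -/
  inn : ∀ p, Sp p → Sp p → ℂ
  /-- `r`, the number of negative eigenvalues of `g`. -/
  idx : ℕ
  /-- The lift `∇^Σ` of the Levi-Civita connection to the spinor bundle. -/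
  nablaS : S.VF → (∀ p, Sp p) → (∀ p, Sp p)
  /-- Complexified directional derivative. -/
  derivC : S.VF → (S.M → ℂ) → (S.M → ℂ)
  derivC_real : ∀ (X : S.VF) (f : S.M → ℝ),
    derivC X (fun p => (f p : ℂ)) = fun p => (G.deriv X f p : ℂ)
  /-- `X·Y·φ + Y·X·φ = −2 g(X,Y) φ`. -/
  clifford : ∀ (p : S.M) (X Y : S.T p) (φ : Sp p),
    cl p X (cl p Y φ) + cl p Y (cl p X φ) = (-2 * (S.g p X Y : ℂ)) • φ
  /-- `⟨X·φ, ψ⟩ = (−1)^{r+1} ⟨φ, X·ψ⟩`. -/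
  adj : ∀ (p : S.M) (X : S.T p) (φ ψ : Sp p),
    inn p (cl p X φ) ψ = (-1 : ℂ) ^ (idx + 1) * inn p φ (cl p X ψ)
  /-- `⟨·,·⟩` is hermitian. -/
  hermitian : ∀ (p : S.M) (φ ψ : Sp p), inn p φ ψ = starRingEnd ℂ (inn p ψ φ)
  add_left : ∀ (p : S.M) (φ φ' ψ : Sp p),
    inn p (φ + φ') ψ = inn p φ ψ + inn p φ' ψ
  smul_left : ∀ (p : S.M) (z : ℂ) (φ ψ : Sp p),
    inn p (z • φ) ψ = z * inn p φ ψ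
  /-- `∇^Σ_Y (X·φ) = (∇_Y X)·φ + X·∇^Σ_Y φ`. -/
  leibniz_cl : ∀ (X Y : S.VF) (φ : ∀ p, Sp p),
    nablaS Y (fun p => cl p (X p) (φ p)) =
      fun p => cl p (G.nabla Y X p) (φ p) + cl p (X p) (nablaS Y φ p)
  /-- `X⟨φ,ψ⟩ = ⟨∇^Σ_X φ, ψ⟩ + ⟨φ, ∇^Σ_X ψ⟩`. -/
  metric_compat : ∀ (X : S.VF) (φ ψ : ∀ p, Sp p),
    derivC X (fun p => inn p (φ p) (ψ p)) =
      fun p => inn p (nablaS X φ p) (ψ p) + inn p (φ p) (nablaS X ψ p)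

attribute [instance] SpinData.sgrp SpinData.smod

/-- Lemma `diraclemma`: on a time-oriented Lorentzian spin
manifold, the Dirac current `V_φ` of a nowhere-vanishing parallel spinor
`φ`, defined by `g(V_φ, X) = i^{r+1} ⟨φ, X·φ⟩`, is a parallel causal vector
field: `V_φ ≠ 0`, `∇ V_φ = 0` and `g(V_φ, V_φ) ≤ 0`. -/
theorem dirac_current_parallel_causal
    (S : SRM) (G : SRM.Geometry S) (hG : G.IsLeviCivita)
    -- time orientation: a global unit time-like vector field
    (Tf : S.VF) (hT : ∀ p, S.g p (Tf p) (Tf p) = -1)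
    -- Lorentzian signature: the metric is positive definite on `Tf^⊥`
    (hLor : ∀ (p : S.M) (v : S.T p), S.g p v (Tf p) = 0 → v ≠ 0 → 0 < S.g p v v)
    (D : SpinData S G)
    -- Lorentzian: one negative eigenvalue
    (hidx : D.idx = 1)
    -- `(φ,ψ)_T = ⟨T·φ, ψ⟩` is positive definite for future-directed
    -- unit time-like `T`
    (hpos : ∀ (p : S.M) (Tv : S.T p), S.g p Tv Tv = -1 →
      S.g p Tv (Tf p) < 0 → ∀ φ : D.Sp p, φ ≠ 0 →
        0 < (D.inn p (D.cl p Tv φ) φ).re ∧ (D.inn p (D.cl p Tv φ) φ).im = 0)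
    -- a nowhere-vanishing parallel spinor field
    (φ : ∀ p, D.Sp p)
    (hφpar : ∀ X : S.VF, D.nablaS X φ = fun _ => 0)
    (hφne : ∀ p, φ p ≠ 0)
    -- the Dirac current of `φ`
    (Vφ : S.VF)
    (hV : ∀ (p : S.M) (X : S.T p),
      (S.g p (Vφ p) X : ℂ) = Complex.I ^ (D.idx + 1) * D.inn p (φ p) (D.cl p X (φ p))) :
    (∀ X : S.VF, G.nabla X Vφ = 0) ∧
    (∀ p, Vφ p ≠ 0) ∧
    (∀ p, S.g p (Vφ p) (Vφ p) ≤ 0) := by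
  
  classical
  obtain ⟨hmc, -, -⟩ := hG
  -- `i^(idx+1) = -1`
  have hI : Complex.I ^ (D.idx + 1) = -1 := by
    rw [hidx]; simp [Complex.I_sq]
  -- Dirac current formula in convenient form
  have hV' : ∀ (p : S.M) (X : S.T p),
      ((S.g p (Vφ p) X : ℝ) : ℂ) = -(D.inn p (φ p) (D.cl p X (φ p))) := by
    intro p X
    have h := hV p X
    rw [hI] at h
    linear_combination h
  -- basic lemmas about the hermitian product
  have inn0L : ∀ (p : S.M) (ψ : D.Sp p), D.inn p 0 ψ = 0 := by
    intro p ψ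
    have h := D.add_left p 0 0 ψ
    rw [add_zero] at h
    linear_combination -h
  have inn0R : ∀ (p : S.M) (ψ : D.Sp p), D.inn p ψ 0 = 0 := by
    intro p ψ
    rw [D.hermitian, inn0L]
    simp
  have innNegL : ∀ (p : S.M) (χ ψ : D.Sp p), D.inn p (-χ) ψ = -(D.inn p χ ψ) := by
    intro p χ ψ
    have h := D.add_left p χ (-χ) ψ
    rw [add_neg_cancel, inn0L] at h
    linear_combination -h
  have innNegR : ∀ (p : S.M) (χ ψ : D.Sp p), D.inn p χ (-ψ) = -(D.inn p χ ψ) := by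
    intro p χ ψ
    rw [D.hermitian, innNegL, D.hermitian p ψ χ]
    simp
  have innAddR : ∀ (p : S.M) (χ ψ ψ' : D.Sp p),
      D.inn p χ (ψ + ψ') = D.inn p χ ψ + D.inn p χ ψ' := by
    intro p χ ψ ψ'
    rw [D.hermitian, D.add_left, map_add, ← D.hermitian, ← D.hermitian]
  have innSmulR : ∀ (p : S.M) (z : ℂ) (χ ψ : D.Sp p),
      D.inn p χ (z • ψ) = (starRingEnd ℂ) z * D.inn p χ ψ := by
    intro p z χ ψ
    rw [D.hermitian, D.smul_left, map_mul, ← D.hermitian]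
  -- adjointness with the Lorentzian sign
  have hadj : ∀ (p : S.M) (X : S.T p) (χ ψ : D.Sp p),
      D.inn p (D.cl p X χ) ψ = D.inn p χ (D.cl p X ψ) := by
    intro p X χ ψ
    have h := D.adj p X χ ψ
    rw [hidx] at h
    simpa using h
  -- positivity of the `T`-form
  have posT : ∀ (p : S.M) (χ : D.Sp p), χ ≠ 0 →
      0 < (D.inn p (D.cl p (Tf p) χ) χ).re := by
    intro p χ h
    exact (hpos p (Tf p) (hT p) (by rw [hT p]; norm_num) χ h).1
  -- nondegeneracy
  have nondeg : ∀ (p : S.M) (χ : D.Sp p), (∀ ψ : D.Sp p, D.inn p χ ψ = 0) → χ = 0 := by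
    intro p χ h
    by_contra h0
    have h1 := posT p χ h0
    rw [hadj, h (D.cl p (Tf p) χ)] at h1
    simp at h1
  have eqInn : ∀ (p : S.M) (A B : D.Sp p),
      (∀ ψ : D.Sp p, D.inn p A ψ = D.inn p B ψ) → A = B := by
    intro p A B h
    have h0 : ∀ ψ : D.Sp p, D.inn p (A - B) ψ = 0 := by
      intro ψ
      rw [sub_eq_add_neg, D.add_left, innNegL, h ψ]
      ring
    exact sub_eq_zero.mp (nondeg p (A - B) h0)
  -- Clifford multiplication is linear in the spinor slot
  have cl_smul : ∀ (p : S.M) (X : S.T p) (z : ℂ) (χ : D.Sp p),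
      D.cl p X (z • χ) = z • D.cl p X χ := by
    intro p X z χ
    apply eqInn
    intro ψ
    calc D.inn p (D.cl p X (z • χ)) ψ = z * D.inn p χ (D.cl p X ψ) := by
          rw [hadj, D.smul_left]
    _ = D.inn p (z • D.cl p X χ) ψ := by rw [D.smul_left, hadj]
  have cl_add : ∀ (p : S.M) (X : S.T p) (χ χ' : D.Sp p),
      D.cl p X (χ + χ') = D.cl p X χ + D.cl p X χ' := by
    intro p X χ χ'
    apply eqInn
    intro ψ
    calc D.inn p (D.cl p X (χ + χ')) ψ
        = D.inn p χ (D.cl p X ψ) + D.inn p χ' (D.cl p X ψ) := by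
          rw [hadj, D.add_left]
    _ = D.inn p (D.cl p X χ + D.cl p X χ') ψ := by rw [D.add_left, hadj, hadj]
  have cl_zero : ∀ (p : S.M) (X : S.T p), D.cl p X (0 : D.Sp p) = 0 := by
    intro p X
    have h := cl_smul p X 0 0
    simpa using h
  have cl_neg : ∀ (p : S.M) (X : S.T p) (χ : D.Sp p), D.cl p X (-χ) = -(D.cl p X χ) := by
    intro p X χ
    have h := cl_smul p X (-1) χ
    simpa using h
  -- scalar cancellation on a nonzero spinor
  have smul_cancel : ∀ (p : S.M) (x y : ℂ) (χ : D.Sp p), χ ≠ 0 → x • χ = y • χ → x = y := by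
    intro p x y χ hχ h
    by_contra hne
    have h0 : (x - y) • χ = 0 := by rw [sub_smul, h, sub_self]
    have h1 : χ = 0 := by
      have h2 := congrArg (fun w => (x - y)⁻¹ • w) h0
      simpa [smul_smul, inv_mul_cancel₀ (sub_ne_zero.mpr hne)] using h2
    exact hχ h1
  -- symmetry of the metric
  have g_symm : ∀ (p : S.M) (X Y : S.T p), S.g p X Y = S.g p Y X := by
    intro p X Y
    have h1 := D.clifford p X Y (φ p)
    have h2 := D.clifford p Y X (φ p)
    have h3 : (-2 * (S.g p X Y : ℂ)) • φ p = (-2 * (S.g p Y X : ℂ)) • φ p := by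
      rw [← h1, ← h2, add_comm]
    have h4 := smul_cancel p _ _ (φ p) (hφne p) h3
    have h5 : (S.g p X Y : ℂ) = (S.g p Y X : ℂ) := by linear_combination (-1/2 : ℂ) * h4
    exact_mod_cast h5
  -- `X·X·χ = -g(X,X) χ`
  have cl_cl_self : ∀ (p : S.M) (X : S.T p) (χ : D.Sp p),
      D.cl p X (D.cl p X χ) = (-(S.g p X X : ℂ)) • χ := by
    intro p X χ
    have h := D.clifford p X X χ
    have h2 : (2 : ℂ) • D.cl p X (D.cl p X χ) = (2 : ℂ) • ((-(S.g p X X : ℂ)) • χ) := by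
      rw [two_smul, h, smul_smul]
      congr 1
      ring
    have h3 := congrArg (fun w => ((2 : ℂ)⁻¹) • w) h2
    simp only [smul_smul] at h3
    norm_num at h3
    rw [show (1 / 2 * (2 * (S.g p X X : ℂ))) = (S.g p X X : ℂ) from by ring] at h3
    rw [h3]
    exact (neg_smul _ _).symm
  -- parallelism of `Y · φ`
  have par_cl : ∀ X Y : S.VF,
      D.nablaS X (fun p => D.cl p (Y p) (φ p)) = fun p => D.cl p (G.nabla X Y p) (φ p) := by
    intro X Y
    have h := D.leibniz_cl Y X φ
    rw [hφpar X] at h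
    rw [h]
    funext p
    simp only [cl_zero, add_zero]
  -- the section `-φ` is parallel as well
  have par_neg : ∀ X : S.VF, D.nablaS X (fun r => -(φ r)) = fun _ => 0 := by
    intro X
    funext q
    apply nondeg
    intro ψ
    set χ' : ∀ r : S.M, D.Sp r := fun r => if h : q = r then h ▸ ψ else 0 with hχ'def
    have hχq : χ' q = ψ := by
      rw [hχ'def]
      exact dif_pos rfl
    have E1a := congrFun (D.metric_compat X (fun r => -(φ r)) χ') q
    have E1b := congrFun (D.metric_compat X φ (fun r => -(χ' r))) q
    have E2a := congrFun (D.metric_compat X (fun r => -(φ r)) (fun r => -(χ' r))) q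
    have E2b := congrFun (D.metric_compat X φ χ') q
    rw [hφpar X] at E1b E2b
    simp only [inn0L, zero_add] at E1b E2b
    have ef1 : (fun r => D.inn r (-(φ r)) (χ' r)) = (fun r => D.inn r (φ r) (-(χ' r))) := by
      funext r
      rw [innNegL, innNegR]
    have ef2 : (fun r => D.inn r (-(φ r)) (-(χ' r))) = (fun r => D.inn r (φ r) (χ' r)) := by
      funext r
      rw [innNegL, innNegR, neg_neg]
    have e1 : D.inn q (D.nablaS X (fun r => -(φ r)) q) (χ' q)
        + D.inn q (-(φ q)) (D.nablaS X χ' q)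
        = D.inn q (φ q) (D.nablaS X (fun r => -(χ' r)) q) := by
      rw [← E1a, ef1]
      exact E1b
    have e2 : D.inn q (D.nablaS X (fun r => -(φ r)) q) (-(χ' q))
        + D.inn q (-(φ q)) (D.nablaS X (fun r => -(χ' r)) q)
        = D.inn q (φ q) (D.nablaS X χ' q) := by
      rw [← E2a, ef2]
      exact E2b
    rw [innNegR, innNegL] at e2
    rw [innNegL] at e1
    have e3 : D.inn q (D.nablaS X (fun r => -(φ r)) q) (χ' q) = 0 := by
      linear_combination (1/2 : ℂ) * e1 - (1/2 : ℂ) * e2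
    rw [hχq] at e3
    exact e3
  -- the key derivative computation: `g(∇_X Vφ, Y) = 0` everywhere
  have key : ∀ (X Y : S.VF) (q : S.M), S.g q (G.nabla X Vφ q) (Y q) = 0 := by
    intro X Y q
    have hd : G.deriv X (fun p => S.g p (Vφ p) (Y p))
        = fun p => S.g p (Vφ p) (G.nabla X Y p) := by
      have h1 : (fun p => ((S.g p (Vφ p) (Y p) : ℝ) : ℂ))
          = (fun p => D.inn p (-(φ p)) (D.cl p (Y p) (φ p))) := by
        funext p
        rw [innNegL, hV' p (Y p)]
      have h2 := D.metric_compat X (fun r => -(φ r)) (fun r => D.cl r (Y r) (φ r))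
      rw [par_neg X, par_cl X Y] at h2
      have h3 := D.derivC_real X (fun p => S.g p (Vφ p) (Y p))
      rw [h1, h2] at h3
      funext p
      have h4 := congrFun h3 p
      simp only [inn0L, zero_add, innNegL] at h4
      rw [← hV' p (G.nabla X Y p)] at h4
      exact_mod_cast h4.symm
    have hmc' := congrFun (hmc X Vφ Y) q
    rw [hd] at hmc'
    simp only at hmc'
    linarith
  -- pointwise vanishing of `∇_X Vφ`
  have main : ∀ (X : S.VF) (p : S.M), G.nabla X Vφ p = 0 := by
    intro X p
    by_contra hz
    have h1 := key X Tf p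
    have h2 := key X (G.nabla X Vφ) p
    exact absurd h2 (ne_of_gt (hLor p _ h1 hz))
  -- `g p 0 w = 0`
  have gzero : ∀ (p : S.M) (w : S.T p), S.g p 0 w = 0 := by
    intro p w
    have h := key Tf (fun r => if h : p = r then S.tcast h w else 0) p
    rw [main Tf p] at h
    rw [dif_pos rfl] at h
    exact h
  -- positivity of `⟨φ, T·φ⟩`
  have haTpos : ∀ p : S.M, 0 < (D.inn p (φ p) (D.cl p (Tf p) (φ p))).re := by
    intro p
    have h := posT p (φ p) (hφne p)
    rwa [hadj] at h
  refine ⟨?_, ?_, ?_⟩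
  · -- parallel
    intro X
    funext p
    exact main X p
  · -- nowhere vanishing
    intro p hc
    have h := hV' p (Tf p)
    rw [hc, gzero p (Tf p)] at h
    push_cast at h
    have h2 : D.inn p (φ p) (D.cl p (Tf p) (φ p)) = 0 := by linear_combination h
    have h3 := haTpos p
    rw [h2] at h3
    simp at h3
  · -- causal
    intro p
    set A : ℝ := S.g p (Vφ p) (Tf p) with hA
    set Gv : ℝ := S.g p (Vφ p) (Vφ p) with hGv
    have hα : D.inn p (φ p) (D.cl p (Vφ p) (φ p)) = ((-Gv : ℝ) : ℂ) := by
      have h := hV' p (Vφ p)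
      rw [← hGv] at h
      push_cast at h ⊢
      linear_combination h
    have haT : D.inn p (φ p) (D.cl p (Tf p) (φ p)) = ((-A : ℝ) : ℂ) := by
      have h := hV' p (Tf p)
      rw [← hA] at h
      push_cast at h ⊢
      linear_combination h
    have hApos : A < 0 := by
      have h := haTpos p
      rw [haT] at h
      simp at h
      linarith
    have hgTv : S.g p (Tf p) (Vφ p) = A := by rw [g_symm]
    -- `T · (V·φ)`
    have step1 : D.cl p (Tf p) (D.cl p (Vφ p) (φ p))
        = (-2 * (S.g p (Tf p) (Vφ p) : ℂ)) • φ p - D.cl p (Vφ p) (D.cl p (Tf p) (φ p)) :=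
      eq_sub_of_add_eq (D.clifford p (Tf p) (Vφ p) (φ p))
    have step2 : D.cl p (Vφ p) (D.cl p (Tf p) (D.cl p (Vφ p) (φ p)))
        = (-2 * (S.g p (Tf p) (Vφ p) : ℂ)) • D.cl p (Vφ p) (φ p)
          + (S.g p (Vφ p) (Vφ p) : ℂ) • D.cl p (Tf p) (φ p) := by
      rw [step1, sub_eq_add_neg, cl_add, cl_smul, cl_neg, cl_cl_self]
      rw [neg_smul, neg_neg]
    have hK : D.inn p (D.cl p (Tf p) (D.cl p (Vφ p) (φ p))) (D.cl p (Vφ p) (φ p))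
        = ((A * Gv : ℝ) : ℂ) := by
      rw [hadj]
      rw [show D.inn p (D.cl p (Vφ p) (φ p))
            (D.cl p (Tf p) (D.cl p (Vφ p) (φ p)))
          = D.inn p (φ p) (D.cl p (Vφ p) (D.cl p (Tf p) (D.cl p (Vφ p) (φ p)))) from
        hadj p (Vφ p) (φ p) _]
      rw [step2, innAddR, innSmulR, innSmulR, hα, haT, hgTv, ← hGv]
      push_cast
      simp only [map_mul, map_neg, map_ofNat, Complex.conj_ofReal]
      ring
    have hKre : 0 ≤ (D.inn p (D.cl p (Tf p) (D.cl p (Vφ p) (φ p))) (D.cl p (Vφ p) (φ p))).re := by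
      by_cases hu : D.cl p (Vφ p) (φ p) = 0
      · rw [hu, inn0R]
        simp
      · exact le_of_lt (posT p _ hu)
    rw [hK] at hKre
    simp only [Complex.ofReal_re] at hKre
    nlinarith
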